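/- Let y ∈ ℝ₊^{2m+1} have strictly positive components, let x⁰ ∈ ℝ^{m+1} be strictly positive, and define the iterates x^{t+1} = T(x^t) for t ≥ 0. Suppose x^∞ is a strictly positive limit point of the sequence (x^t) and that the sequence t ↦ I(x^∞‖x^t) is nonincreasing. Then the whole sequence converges: x^t → x^∞ as t → ∞, and x^∞ is the unique limit point of (x^t). -/
import Mathlib


open Finset Filter

/-- Extension of `x : Fin (m+1) → ℝ` to `ℕ`, zero outside `[0, m]`. -/
def ext (m : ℕ) (x : Fin (m + 1) → ℝ) (k : ℕ) : ℝ :=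
  if h : k < m + 1 then x ⟨k, h⟩ else 0

/-- Autoconvolution `(x*x)_i = ∑_{j=0}^{i} x_{i-j} x_j`. -/
def aconv (m : ℕ) (x : Fin (m + 1) → ℝ) : Fin (2 * m + 1) → ℝ :=
  fun i => ∑ j ∈ Finset.range (i.1 + 1), ext m x (i.1 - j) * ext m x j

/-- The index `ℓ + j ∈ {0,…,2m}` for `ℓ, j ∈ {0,…,m}`. -/
def idx (m : ℕ) (ℓ j : Fin (m + 1)) : Fin (2 * m + 1) :=
  ⟨ℓ.1 + j.1, by have h1 := ℓ.isLt; have h2 := j.isLt; omega⟩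

/-- One term of the I-divergence, with values in `[0,∞]`, with the conventions
`0·log(0/b) = 0` and value `∞` if `a > 0 = b`. -/
noncomputable def termDiv (a b : ℝ) : ENNReal :=
  if a = 0 then ENNReal.ofReal b
  else if b = 0 then ⊤
  else ENNReal.ofReal (a * Real.log (a / b) - a + b)

/-- `[0,∞]`-valued I-divergence between vectors. -/
noncomputable def Idiv {n : ℕ} (u v : Fin n → ℝ) : ENNReal :=
  ∑ i, termDiv (u i) (v i)

/-- Real-valued I-divergence between vectors (used when the second argument is
positive wherever the first one is). -/
noncomputable def IdivR {n : ℕ} (u v : Fin n → ℝ) : ℝ :=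
  ∑ i, (u i * Real.log (u i / v i) - u i + v i)

/-- `[0,∞]`-valued I-divergence between `(2m+1) × (m+1)` matrices. -/
noncomputable def IdivM (m : ℕ) (M N : Fin (2 * m + 1) → Fin (m + 1) → ℝ) : ENNReal :=
  ∑ i, ∑ j, termDiv (M i j) (N i j)

/-- Real-valued I-divergence between `(2m+1) × (m+1)` matrices. -/
noncomputable def IdivMR (m : ℕ) (M N : Fin (2 * m + 1) → Fin (m + 1) → ℝ) : ℝ :=
  ∑ i, ∑ j, (M i j * Real.log (M i j / N i j) - M i j + N i j)

/-- The set 𝒴: nonnegative matrices supported on `{(i,j) : j ≤ i ≤ j+m}` with row sums `y`. -/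
def calY (m : ℕ) (y : Fin (2 * m + 1) → ℝ) (Y : Fin (2 * m + 1) → Fin (m + 1) → ℝ) : Prop :=
  (∀ i j, 0 ≤ Y i j) ∧
  (∀ (i : Fin (2 * m + 1)) (j : Fin (m + 1)), ¬(j.1 ≤ i.1 ∧ i.1 ≤ j.1 + m) → Y i j = 0) ∧
  (∀ i, ∑ j, Y i j = y i)

/-- The matrix `W(x)` with `W(x)_{ij} = x_{i-j} x_j` on the support and `0` elsewhere. -/
def Wmat (m : ℕ) (x : Fin (m + 1) → ℝ) (i : Fin (2 * m + 1)) (j : Fin (m + 1)) : ℝ :=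
  if h : j.1 ≤ i.1 ∧ i.1 ≤ j.1 + m then x ⟨i.1 - j.1, by omega⟩ * x j else 0

/-- The matrix `Y*(x)` with `Y*(x)_{ij} = (x_{i-j} x_j/(x*x)_i)·y_i` on the support. -/
noncomputable def Ystar (m : ℕ) (y : Fin (2 * m + 1) → ℝ) (x : Fin (m + 1) → ℝ)
    (i : Fin (2 * m + 1)) (j : Fin (m + 1)) : ℝ :=
  if h : j.1 ≤ i.1 ∧ i.1 ≤ j.1 + m then
    x ⟨i.1 - j.1, by omega⟩ * x j / aconv m x i * y i
  else 0

/-- `Ŷ_j = ∑_{i=0}^{m} Y_{i+j,i} + ∑_{i=j}^{j+m} Y_{ij}`. -/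
def Yhat (m : ℕ) (Y : Fin (2 * m + 1) → Fin (m + 1) → ℝ) (j : Fin (m + 1)) : ℝ :=
  (∑ ℓ : Fin (m + 1), Y (idx m ℓ j) ℓ) + ∑ ℓ : Fin (m + 1), Y (idx m ℓ j) j

/-- The algorithm map `T(x)_j = x_j (1/c) ∑_ℓ x_ℓ y_{ℓ+j}/(x*x)_{ℓ+j}`,
with `c = √(∑ y_i)`. -/
noncomputable def Tmap (m : ℕ) (y : Fin (2 * m + 1) → ℝ) (x : Fin (m + 1) → ℝ)
    (j : Fin (m + 1)) : ℝ :=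
  x j * (1 / Real.sqrt (∑ i, y i)) * ∑ ℓ, x ℓ * y (idx m ℓ j) / aconv m x (idx m ℓ j)

/-- The gradient `∇_j I(x) = 2 ∑_ℓ ( x_ℓ − x_ℓ y_{ℓ+j}/(x*x)_{ℓ+j} )`. -/
noncomputable def gradI (m : ℕ) (y : Fin (2 * m + 1) → ℝ) (x : Fin (m + 1) → ℝ)
    (j : Fin (m + 1)) : ℝ :=
  2 * ∑ ℓ, (x ℓ - x ℓ * y (idx m ℓ j) / aconv m x (idx m ℓ j))

lemma ext_nonneg (m : ℕ) (x : Fin (m + 1) → ℝ) (hx : ∀ j, 0 < x j) (k : ℕ) :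
    0 ≤ ext m x k := by
  unfold _root_.ext; split
  · exact (hx _).le
  · exact le_refl 0

lemma ext_pos (m : ℕ) (x : Fin (m + 1) → ℝ) (hx : ∀ j, 0 < x j) (k : ℕ) (hk : k < m + 1) :
    0 < ext m x k := by
  unfold _root_.ext; rw [dif_pos hk]; exact hx _

lemma aconv_pos (m : ℕ) (x : Fin (m + 1) → ℝ) (hx : ∀ j, 0 < x j) (i : Fin (2 * m + 1)) :
    0 < aconv m x i := by
  have hi := i.isLt
  unfold aconv
  apply Finset.sum_pos'
  · intro j _
    exact mul_nonneg (ext_nonneg m x hx _) (ext_nonneg m x hx _)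
  · refine ⟨i.1 - m, Finset.mem_range.mpr (by omega), ?_⟩
    exact mul_pos (ext_pos m x hx _ (by omega)) (ext_pos m x hx _ (by omega))

lemma key_ineq (u b : ℝ) (hu : 0 < u) (hb : 0 < b) :
    (Real.sqrt b - Real.sqrt u) ^ 2 ≤ u * Real.log (u / b) - u + b := by
  have hbu : 0 < b / u := div_pos hb hu
  have h3 : Real.log (Real.sqrt (b / u)) ≤ Real.sqrt (b / u) - 1 :=
    Real.log_le_sub_one_of_pos (Real.sqrt_pos.mpr hbu)
  have h2 : Real.log (Real.sqrt (b / u)) = Real.log (b / u) / 2 := Real.log_sqrt hbu.le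
  have h1 : Real.log (u / b) = - Real.log (b / u) := by
    rw [← Real.log_inv, inv_div]
  have h4 : Real.sqrt (b / u) = Real.sqrt b / Real.sqrt u := Real.sqrt_div' b hu.le
  have hsu : 0 < Real.sqrt u := Real.sqrt_pos.mpr hu
  have hsb : 0 < Real.sqrt b := Real.sqrt_pos.mpr hb
  have hsu2 : Real.sqrt u ^ 2 = u := Real.sq_sqrt hu.le
  have hsb2 : Real.sqrt b ^ 2 = b := Real.sq_sqrt hb.le
  rw [h1]
  have h5 : Real.log (b/u) = 2 * Real.log (Real.sqrt (b/u)) := by rw [h2]; ring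
  rw [h5]
  have h6 : u * Real.sqrt (b/u) = Real.sqrt u * Real.sqrt b := by
    rw [h4]; field_simp; nlinarith [hsu2]
  nlinarith [mul_le_mul_of_nonneg_left h3 (by positivity : (0:ℝ) ≤ 2*u), h6, hsu2, hsb2]

/-- if `I(x^∞‖x^t)` is nonincreasing for a strictly positive limit
point `x^∞`, then the whole sequence converges to `x^∞`, which is the unique
limit point. -/
theorem stmt19 (m : ℕ) (y : Fin (2 * m + 1) → ℝ) (hy : ∀ i, 0 < y i)
    (xs : ℕ → Fin (m + 1) → ℝ) (h0 : ∀ j, 0 < xs 0 j)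
    (hstep : ∀ t, xs (t + 1) = Tmap m y (xs t))
    (xinf : Fin (m + 1) → ℝ) (hpos : ∀ j, 0 < xinf j)
    (hlim : ∃ φ : ℕ → ℕ, StrictMono φ ∧
      Filter.Tendsto (fun k => xs (φ k)) Filter.atTop (nhds xinf))
    (hmono : ∀ t, IdivR xinf (xs (t + 1)) ≤ IdivR xinf (xs t)) :
    Filter.Tendsto xs Filter.atTop (nhds xinf) ∧
    ∀ x' : Fin (m + 1) → ℝ,
      (∃ ψ : ℕ → ℕ, StrictMono ψ ∧
        Filter.Tendsto (fun k => xs (ψ k)) Filter.atTop (nhds x')) → x' = xinf := by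

  obtain ⟨φ, hφ, hφlim⟩ := hlim
  have hxs : ∀ t j, 0 < xs t j := by
    intro t
    induction t with
    | zero => exact h0
    | succ t ih =>
      intro j
      rw [hstep t]
      unfold Tmap
      have hS : 0 < ∑ i, y i :=
        Finset.sum_pos (fun i _ => hy i) ⟨⟨0, by omega⟩, Finset.mem_univ _⟩
      have h1 : 0 < (1 : ℝ) / Real.sqrt (∑ i, y i) := by positivity
      refine mul_pos (mul_pos (ih j) h1) ?_
      refine Finset.sum_pos (fun ℓ _ => ?_) ⟨j, Finset.mem_univ _⟩
      exact div_pos (mul_pos (ih ℓ) (hy _)) (aconv_pos m (xs t) ih _)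
  set a : ℕ → ℝ := fun t => IdivR xinf (xs t) with ha
  have hanti : Antitone a := antitone_nat_of_succ_le hmono
  have hcoord : ∀ j, Filter.Tendsto (fun k => xs (φ k) j) Filter.atTop (nhds (xinf j)) :=
    fun j => (tendsto_pi_nhds.mp hφlim) j
  have hterm0 : ∀ j : Fin (m + 1), Filter.Tendsto
      (fun k => xinf j * Real.log (xinf j / xs (φ k) j) - xinf j + xs (φ k) j)
      Filter.atTop (nhds 0) := by
    intro j
    have hc : ContinuousAt (fun b : ℝ => xinf j * Real.log (xinf j / b) - xinf j + b)
        (xinf j) := by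
      have hb : ContinuousAt (fun b : ℝ => xinf j / b) (xinf j) :=
        continuousAt_const.div continuousAt_id (ne_of_gt (hpos j))
      have hl : ContinuousAt Real.log (xinf j / xinf j) :=
        Real.continuousAt_log (by rw [div_self (ne_of_gt (hpos j))]; norm_num)
      exact ((continuousAt_const.mul (hl.comp hb)).sub continuousAt_const).add continuousAt_id
    have h2 := hc.tendsto.comp (hcoord j)
    have h3 : xinf j * Real.log (xinf j / xinf j) - xinf j + xinf j = 0 := by
      rw [div_self (ne_of_gt (hpos j)), Real.log_one]; ring
    rw [h3] at h2
    exact h2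
  have haφ : Filter.Tendsto (fun k => a (φ k)) Filter.atTop (nhds 0) := by
    have h4 := tendsto_finset_sum (Finset.univ : Finset (Fin (m + 1)))
      (fun j _ => hterm0 j)
    simpa [ha, IdivR] using h4
  have hterm_ge : ∀ t j, (Real.sqrt (xs t j) - Real.sqrt (xinf j)) ^ 2 ≤
      xinf j * Real.log (xinf j / xs t j) - xinf j + xs t j :=
    fun t j => key_ineq (xinf j) (xs t j) (hpos j) (hxs t j)
  have ha_nonneg : ∀ t, 0 ≤ a t := by
    intro t
    refine Finset.sum_nonneg fun j _ => le_trans (sq_nonneg _) (hterm_ge t j)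
  have halim : Filter.Tendsto a Filter.atTop (nhds 0) := by
    have hbdd : BddBelow (Set.range a) := ⟨0, by rintro x ⟨t, rfl⟩; exact ha_nonneg t⟩
    have h1 : Filter.Tendsto a Filter.atTop (nhds (⨅ t, a t)) :=
      tendsto_atTop_ciInf hanti hbdd
    have h2 : Filter.Tendsto (fun k => a (φ k)) Filter.atTop (nhds (⨅ t, a t)) :=
      h1.comp hφ.tendsto_atTop
    rwa [tendsto_nhds_unique h2 haφ] at h1
  have hmain : Filter.Tendsto xs Filter.atTop (nhds xinf) := by
    rw [tendsto_pi_nhds]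
    intro j
    have hsq : Filter.Tendsto (fun t => (Real.sqrt (xs t j) - Real.sqrt (xinf j)) ^ 2)
        Filter.atTop (nhds 0) := by
      refine squeeze_zero (fun t => sq_nonneg _) (fun t => ?_) halim
      refine le_trans (hterm_ge t j) ?_
      exact Finset.single_le_sum
        (f := fun i => xinf i * Real.log (xinf i / xs t i) - xinf i + xs t i)
        (fun i _ => le_trans (sq_nonneg _) (hterm_ge t i)) (Finset.mem_univ j)
    have habs : Filter.Tendsto (fun t => |Real.sqrt (xs t j) - Real.sqrt (xinf j)|)
        Filter.atTop (nhds 0) := by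
      have h5 := (Real.continuous_sqrt.tendsto 0).comp hsq
      simpa [Function.comp_def, Real.sqrt_sq_eq_abs] using h5
    have hd : Filter.Tendsto (fun t => Real.sqrt (xs t j) - Real.sqrt (xinf j))
        Filter.atTop (nhds 0) := by
      exact (tendsto_zero_iff_abs_tendsto_zero _).mpr habs
    have hs : Filter.Tendsto (fun t => Real.sqrt (xs t j)) Filter.atTop
        (nhds (Real.sqrt (xinf j))) := by
      have h6 := hd.add (tendsto_const_nhds (x := Real.sqrt (xinf j)))
      simpa using h6
    have h7 := hs.mul hs
    rw [Real.mul_self_sqrt (hpos j).le] at h7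
    exact h7.congr fun t => Real.mul_self_sqrt (hxs t j).le
  refine ⟨hmain, ?_⟩
  rintro x' ⟨ψ, hψ, hψlim⟩
  exact tendsto_nhds_unique hψlim (hmain.comp hψ.tendsto_atTop)
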